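/- The ã-type anyons satisfy the braiding relations obtained from those of the a-type anyons by replacing q with q⁻¹: for all sites r, s : Fin L with r > s, ã(r)ã(s) + q ã(s)ã(r) = 0, ã†(r)ã†(s) + q ã†(s)ã†(r) = 0, ã†(r)ã(s) + q⁻¹ ã(s)ã†(r) = 0, and ã(r)ã†(s) + q⁻¹ ã†(s)ã(r) = 0; moreover, for every site r, ã(r)ã†(r) + ã†(r)ã(r) = 1 and ã(r)² = ã†(r)² = 0. -/
import Mathlib


/-!
Anyonic oscillators on a one-dimensional lattice `Fin L`, built from fermionic
oscillators on the fermionic Fock space `(Fin L → Bool) →₀ ℂ` and disorder factors.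
-/

noncomputable section

/-- The fermionic Fock space on a lattice of `L` sites. -/
abbrev FSpace (L : ℕ) : Type := (Fin L → Bool) →₀ ℂ

/-- The Jordan–Wigner sign `(−1)^{#{t < r : f t = true}}`. -/
def fSign {L : ℕ} (f : Fin L → Bool) (r : Fin L) : ℂ :=
  (-1 : ℂ) ^ (Finset.univ.filter fun t => t < r ∧ f t = true).card

/-- The fermionic annihilation operator `c(r)`. -/
def cAnn {L : ℕ} (r : Fin L) : Module.End ℂ (FSpace L) :=
  Finsupp.lift (FSpace L) ℂ (Fin L → Bool) fun f =>
    if f r = true then fSign f r • Finsupp.single (Function.update f r false) (1 : ℂ) else 0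

/-- The fermionic creation operator `c†(r)`. -/
def cCre {L : ℕ} (r : Fin L) : Module.End ℂ (FSpace L) :=
  Finsupp.lift (FSpace L) ℂ (Fin L → Bool) fun f =>
    if f r = false then fSign f r • Finsupp.single (Function.update f r true) (1 : ℂ) else 0

/-- The number operator `n(r) : |f⟩ ↦ f(r)·|f⟩`. -/
def nOp {L : ℕ} (r : Fin L) : Module.End ℂ (FSpace L) :=
  Finsupp.lift (FSpace L) ℂ (Fin L → Bool) fun f =>
    (if f r = true then (1 : ℂ) else 0) • Finsupp.single f (1 : ℂ)

/-- The exponent `Σ_t ε(t−r) f(t)`, where `ε` is the sign function. -/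
def fExp {L : ℕ} (r : Fin L) (f : Fin L → Bool) : ℤ :=
  ∑ t : Fin L, Int.sign (((t : ℕ) : ℤ) - ((r : ℕ) : ℤ)) * (if f t = true then 1 else 0)

/-- The disorder operator `K⁺(r) : |f⟩ ↦ p^{Σ_t ε(t−r) f(t)} |f⟩`. -/
def Kplus {L : ℕ} (p : ℂ) (r : Fin L) : Module.End ℂ (FSpace L) :=
  Finsupp.lift (FSpace L) ℂ (Fin L → Bool) fun f =>
    (p ^ fExp r f) • Finsupp.single f (1 : ℂ)

/-- The disorder operator `K⁻(r) : |f⟩ ↦ p^{−Σ_t ε(t−r) f(t)} |f⟩`. -/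
def Kminus {L : ℕ} (p : ℂ) (r : Fin L) : Module.End ℂ (FSpace L) :=
  Finsupp.lift (FSpace L) ℂ (Fin L → Bool) fun f =>
    (p ^ (-fExp r f)) • Finsupp.single f (1 : ℂ)

/-- The anyonic oscillator `a(r) = K⁻(r) ∘ c(r)`. -/
def aAnn {L : ℕ} (p : ℂ) (r : Fin L) : Module.End ℂ (FSpace L) := Kminus p r * cAnn r

/-- The anyonic oscillator `a†(r) = K⁺(r) ∘ c†(r)`. -/
def aCre {L : ℕ} (p : ℂ) (r : Fin L) : Module.End ℂ (FSpace L) := Kplus p r * cCre r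

/-- The anyonic oscillator `ã(r) = K⁺(r) ∘ c(r)`. -/
def taAnn {L : ℕ} (p : ℂ) (r : Fin L) : Module.End ℂ (FSpace L) := Kplus p r * cAnn r

/-- The anyonic oscillator `ã†(r) = K⁻(r) ∘ c†(r)`. -/
def taCre {L : ℕ} (p : ℂ) (r : Fin L) : Module.End ℂ (FSpace L) := Kminus p r * cCre r

/-! ### Auxiliary lemmas -/

section TildeAux
open Function

variable {L : ℕ}

lemma tld_lift_single (g : (Fin L → Bool) → FSpace L) (f : Fin L → Bool) :
    Finsupp.lift (FSpace L) ℂ (Fin L → Bool) g (Finsupp.single f 1) = g f := by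
  rw [Finsupp.lift_apply, Finsupp.sum_single_index (by simp), one_smul]

lemma tld_end_ext {A B : Module.End ℂ (FSpace L)}
    (h : ∀ f : Fin L → Bool, A (Finsupp.single f 1) = B (Finsupp.single f 1)) : A = B := by
  refine Finsupp.lhom_ext fun f c => ?_
  have hc : (Finsupp.single f c : FSpace L) = c • Finsupp.single f 1 := by
    rw [Finsupp.smul_single, smul_eq_mul, mul_one]
  rw [hc, map_smul, map_smul, h]

lemma tld_end_eq_zero {A : Module.End ℂ (FSpace L)}
    (h : ∀ f : Fin L → Bool, A (Finsupp.single f 1) = 0) : A = 0 :=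
  tld_end_ext fun f => by rw [h f]; rfl

lemma tld_cAnn_single (r : Fin L) (f : Fin L → Bool) :
    cAnn r (Finsupp.single f 1) =
      if f r = true then fSign f r • Finsupp.single (Function.update f r false) (1 : ℂ) else 0 :=
  tld_lift_single _ f

lemma tld_cCre_single (r : Fin L) (f : Fin L → Bool) :
    cCre r (Finsupp.single f 1) =
      if f r = false then fSign f r • Finsupp.single (Function.update f r true) (1 : ℂ) else 0 :=
  tld_lift_single _ f

lemma tld_Kplus_single (p : ℂ) (r : Fin L) (f : Fin L → Bool) :
    Kplus p r (Finsupp.single f 1) = (p ^ fExp r f) • Finsupp.single f (1 : ℂ) :=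
  tld_lift_single _ f

lemma tld_Kminus_single (p : ℂ) (r : Fin L) (f : Fin L → Bool) :
    Kminus p r (Finsupp.single f 1) = (p ^ (-fExp r f)) • Finsupp.single f (1 : ℂ) :=
  tld_lift_single _ f

lemma tld_fExp_update (s r : Fin L) (f : Fin L → Bool) (b : Bool) :
    fExp s (Function.update f r b) = fExp s f +
      Int.sign (((r : ℕ) : ℤ) - ((s : ℕ) : ℤ)) *
        ((if b = true then 1 else 0) - (if f r = true then 1 else 0)) := by
  unfold fExp
  rw [← Finset.sum_erase_add _ _ (Finset.mem_univ r),
      ← Finset.sum_erase_add (f := fun t : Fin L =>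
        Int.sign (((t : ℕ) : ℤ) - ((s : ℕ) : ℤ)) * (if f t = true then 1 else 0))
        _ (Finset.mem_univ r)]
  have h1 : ∑ t ∈ Finset.univ.erase r,
      Int.sign (((t : ℕ) : ℤ) - ((s : ℕ) : ℤ)) * (if Function.update f r b t = true then 1 else 0)
      = ∑ t ∈ Finset.univ.erase r,
      Int.sign (((t : ℕ) : ℤ) - ((s : ℕ) : ℤ)) * (if f t = true then 1 else 0) := by
    refine Finset.sum_congr rfl fun t ht => ?_
    rw [Function.update_of_ne (Finset.ne_of_mem_erase ht)]
  rw [h1, Function.update_self]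
  ring

lemma tld_fExp_update_self (r : Fin L) (f : Fin L → Bool) (b : Bool) :
    fExp r (Function.update f r b) = fExp r f := by
  rw [tld_fExp_update]; simp

lemma tld_fSign_sq (f : Fin L → Bool) (r : Fin L) : fSign f r * fSign f r = 1 := by
  rw [fSign, ← mul_pow]; norm_num

lemma tld_fSign_update_of_ge {s r : Fin L} (h : ¬ s < r) (f : Fin L → Bool) (b : Bool) :
    fSign (Function.update f s b) r = fSign f r := by
  unfold fSign
  have hset : (Finset.univ.filter fun t : Fin L => t < r ∧ Function.update f s b t = true)
      = Finset.univ.filter fun t : Fin L => t < r ∧ f t = true := by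
    ext t
    simp only [Finset.mem_filter, Finset.mem_univ, true_and]
    constructor <;> rintro ⟨h1, h2⟩ <;> refine ⟨h1, ?_⟩
    · rwa [Function.update_of_ne (ne_of_lt (lt_of_lt_of_le h1 (not_lt.mp h)))] at h2
    · rwa [Function.update_of_ne (ne_of_lt (lt_of_lt_of_le h1 (not_lt.mp h)))]
  rw [hset]

lemma tld_fSign_update_insert {s r : Fin L} (h : s < r) {f : Fin L → Bool} (hfs : f s = false) :
    fSign (Function.update f s true) r = -fSign f r := by
  have hset : (Finset.univ.filter fun t : Fin L => t < r ∧ Function.update f s true t = true)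
      = insert s (Finset.univ.filter fun t : Fin L => t < r ∧ f t = true) := by
    ext t
    simp only [Finset.mem_filter, Finset.mem_insert, Finset.mem_univ, true_and]
    by_cases hts : t = s
    · subst hts; simp [Function.update_self, h]
    · rw [Function.update_of_ne hts]; simp [hts]
  have hs : s ∉ Finset.univ.filter fun t : Fin L => t < r ∧ f t = true := by simp [hfs]
  rw [fSign, fSign, hset, Finset.card_insert_of_notMem hs, pow_succ]
  ring

lemma tld_fSign_update_flip {s r : Fin L} (h : s < r) {f : Fin L → Bool} (b : Bool)
    (hb : f s ≠ b) : fSign (Function.update f s b) r = -fSign f r := by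
  cases b with
  | true => exact tld_fSign_update_insert h (by simpa using hb)
  | false =>
    have hfs : f s = true := by simpa using hb
    have h2 : Function.update (Function.update f s false) s true = f := by
      rw [Function.update_idem, ← hfs, Function.update_eq_self]
    have h3 := tld_fSign_update_insert (f := Function.update f s false) h
      (Function.update_self s false f)
    rw [h2] at h3
    rw [h3, neg_neg]

/-- Unified anyonic operator: `σ = 1, b = true` gives `ã`, `σ = -1, b = false` gives `ã†`. -/
def tldT (p : ℂ) (σ : ℤ) (b : Bool) (r : Fin L) : Module.End ℂ (FSpace L) :=
  Finsupp.lift (FSpace L) ℂ (Fin L → Bool) fun f =>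
    if f r = b then (fSign f r * p ^ (σ * fExp r f)) •
      Finsupp.single (Function.update f r (!b)) (1 : ℂ) else 0

lemma tldT_single (p : ℂ) (σ : ℤ) (b : Bool) (r : Fin L) (f : Fin L → Bool) :
    tldT p σ b r (Finsupp.single f 1) =
      if f r = b then (fSign f r * p ^ (σ * fExp r f)) •
        Finsupp.single (Function.update f r (!b)) (1 : ℂ) else 0 :=
  tld_lift_single _ f

lemma tld_taAnn_single (p : ℂ) (r : Fin L) (f : Fin L → Bool) :
    taAnn p r (Finsupp.single f 1) =
      if f r = true then (fSign f r * p ^ fExp r f) •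
        Finsupp.single (Function.update f r false) (1 : ℂ) else 0 := by
  rw [taAnn, Module.End.mul_apply, tld_cAnn_single]
  split_ifs with h
  · rw [map_smul, tld_Kplus_single, smul_smul, tld_fExp_update_self, mul_comm]
  · rw [map_zero]

lemma tld_taCre_single (p : ℂ) (r : Fin L) (f : Fin L → Bool) :
    taCre p r (Finsupp.single f 1) =
      if f r = false then (fSign f r * p ^ (-fExp r f)) •
        Finsupp.single (Function.update f r true) (1 : ℂ) else 0 := by
  rw [taCre, Module.End.mul_apply, tld_cCre_single]
  split_ifs with h
  · rw [map_smul, tld_Kminus_single, smul_smul, tld_fExp_update_self, mul_comm]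
  · rw [map_zero]

lemma tld_taAnn_eq (p : ℂ) (r : Fin L) : taAnn p r = tldT p 1 true r := by
  refine tld_end_ext fun f => ?_
  rw [tld_taAnn_single, tldT_single]
  simp [one_mul]

lemma tld_taCre_eq (p : ℂ) (r : Fin L) : taCre p r = tldT p (-1) false r := by
  refine tld_end_ext fun f => ?_
  rw [tld_taCre_single, tldT_single]
  simp [neg_one_mul]

/-- `±1` exponent weight. -/
def tldE (b : Bool) : ℤ := if b then 1 else -1

lemma tldT_braid (p : ℂ) (hp : p ≠ 0) (σ₁ σ₂ : ℤ) (b₁ b₂ : Bool) (r s : Fin L)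
    (hsr : s < r) :
    tldT p σ₁ b₁ r * tldT p σ₂ b₂ s
      + (p ^ (σ₁ * tldE b₂ + σ₂ * tldE b₁)) • (tldT p σ₂ b₂ s * tldT p σ₁ b₁ r) = 0 := by
  have hrs : r ≠ s := ne_of_gt hsr
  have hsr' : s ≠ r := ne_of_lt hsr
  have hnrs : ¬ r < s := not_lt.mpr (le_of_lt hsr)
  have hZ : ((s : ℕ) : ℤ) < ((r : ℕ) : ℤ) := by exact_mod_cast hsr
  have hsign1 : Int.sign (((r : ℕ) : ℤ) - ((s : ℕ) : ℤ)) = 1 :=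
    Int.sign_eq_one_of_pos (by linarith)
  have hsign2 : Int.sign (((s : ℕ) : ℤ) - ((r : ℕ) : ℤ)) = -1 :=
    Int.sign_eq_neg_one_of_neg (by linarith)
  refine tld_end_eq_zero fun f => ?_
  simp only [LinearMap.add_apply, LinearMap.smul_apply, Module.End.mul_apply,
    LinearMap.zero_apply, tldT_single]
  by_cases h2 : f s = b₂
  · by_cases h1 : f r = b₁
    · rw [if_pos h2, if_pos h1, map_smul, map_smul, tldT_single, tldT_single,
        if_pos (show (Function.update f s (!b₂)) r = b₁ by
          rw [Function.update_of_ne hrs]; exact h1),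
        if_pos (show (Function.update f r (!b₁)) s = b₂ by
          rw [Function.update_of_ne hsr']; exact h2),
        Function.update_comm hrs, smul_smul, smul_smul, smul_smul, ← add_smul]
      apply smul_eq_zero_of_left
      have e2 : fExp r (Function.update f s (!b₂)) = fExp r f + tldE b₂ := by
        rw [tld_fExp_update, hsign2, h2]; cases b₂ <;> simp [tldE] <;> ring
      have e1 : fExp s (Function.update f r (!b₁)) = fExp s f - tldE b₁ := by
        rw [tld_fExp_update, hsign1, h1]; cases b₁ <;> simp [tldE] <;> ring
      have s2 : fSign (Function.update f s (!b₂)) r = -fSign f r :=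
        tld_fSign_update_flip hsr (!b₂) (by rw [h2]; exact (Bool.not_ne_self b₂).symm)
      have s1 : fSign (Function.update f r (!b₁)) s = fSign f s :=
        tld_fSign_update_of_ge hnrs f (!b₁)
      rw [e1, e2, s1, s2, mul_add σ₁, mul_sub σ₂, zpow_add₀ hp, zpow_sub₀ hp,
        zpow_add₀ hp (σ₁ * tldE b₂)]
      have hzne : p ^ (σ₂ * tldE b₁) ≠ 0 := zpow_ne_zero _ hp
      field_simp [hzne]
      ring
    · rw [if_pos h2, if_neg h1, map_smul, tldT_single,
        if_neg (show ¬ (Function.update f s (!b₂)) r = b₁ by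
          rw [Function.update_of_ne hrs]; exact h1),
        smul_zero, map_zero, smul_zero, add_zero]
  · rw [if_neg h2, map_zero]
    by_cases h1 : f r = b₁
    · rw [if_pos h1, map_smul, tldT_single,
        if_neg (show ¬ (Function.update f r (!b₁)) s = b₂ by
          rw [Function.update_of_ne hsr']; exact h2),
        smul_zero, smul_zero, zero_add]
    · rw [if_neg h1, map_zero, smul_zero, add_zero]

lemma tld_taAnn_sq (p : ℂ) (r : Fin L) : taAnn p r * taAnn p r = 0 := by
  refine tld_end_eq_zero fun f => ?_
  rw [Module.End.mul_apply, tld_taAnn_single]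
  split_ifs with h
  · rw [map_smul, tld_taAnn_single, if_neg (show ¬ (Function.update f r false) r = true by simp), smul_zero]
  · rw [map_zero]

lemma tld_taCre_sq (p : ℂ) (r : Fin L) : taCre p r * taCre p r = 0 := by
  refine tld_end_eq_zero fun f => ?_
  rw [Module.End.mul_apply, tld_taCre_single]
  split_ifs with h
  · rw [map_smul, tld_taCre_single, if_neg (show ¬ (Function.update f r true) r = false by simp), smul_zero]
  · rw [map_zero]

lemma tld_same_site (p : ℂ) (hp : p ≠ 0) (r : Fin L) :
    taAnn p r * taCre p r + taCre p r * taAnn p r = 1 := by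
  have hnrr : ¬ r < r := lt_irrefl r
  refine tld_end_ext fun f => ?_
  simp only [LinearMap.add_apply, Module.End.mul_apply, Module.End.one_apply]
  rw [tld_taAnn_single, tld_taCre_single]
  cases hf : f r
  · rw [if_neg (show ¬ (false : Bool) = true by simp), if_pos (rfl : (false : Bool) = false), map_zero, add_zero, map_smul, tld_taAnn_single,
      if_pos (Function.update_self r true f), smul_smul,
      tld_fSign_update_of_ge hnrr, tld_fExp_update_self,
      Function.update_idem]
    have hupd : Function.update f r false = f := by rw [← hf, Function.update_eq_self]
    rw [hupd]
    have : fSign f r * p ^ (-fExp r f) * (fSign f r * p ^ fExp r f) = 1 := by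
      have hs := tld_fSign_sq f r
      have hpw : p ^ (-fExp r f) * p ^ fExp r f = 1 := by
        rw [← zpow_add₀ hp, neg_add_cancel, zpow_zero]
      calc fSign f r * p ^ (-fExp r f) * (fSign f r * p ^ fExp r f)
          = (fSign f r * fSign f r) * (p ^ (-fExp r f) * p ^ fExp r f) := by ring
        _ = 1 := by rw [hs, hpw, one_mul]
    rw [this, one_smul]
  · rw [if_pos (rfl : (true : Bool) = true), if_neg (show ¬ (true : Bool) = false by simp), map_zero, zero_add, map_smul, tld_taCre_single,
      if_pos (Function.update_self r false f), smul_smul,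
      tld_fSign_update_of_ge hnrr, tld_fExp_update_self,
      Function.update_idem]
    have hupd : Function.update f r true = f := by rw [← hf, Function.update_eq_self]
    rw [hupd]
    have : fSign f r * p ^ fExp r f * (fSign f r * p ^ (-fExp r f)) = 1 := by
      have hs := tld_fSign_sq f r
      have hpw : p ^ fExp r f * p ^ (-fExp r f) = 1 := by
        rw [← zpow_add₀ hp, add_neg_cancel, zpow_zero]
      calc fSign f r * p ^ fExp r f * (fSign f r * p ^ (-fExp r f))
          = (fSign f r * fSign f r) * (p ^ fExp r f * p ^ (-fExp r f)) := by ring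
        _ = 1 := by rw [hs, hpw, one_mul]
    rw [this, one_smul]

end TildeAux

/-- braiding and same-site relations of the `ã`-type anyons, obtained
from those of the `a`-type anyons by replacing `q` with `q⁻¹`. -/
theorem tilde_anyon_braiding (L : ℕ) (hL : 1 ≤ L) (p : ℂ) (hp : p ≠ 0)
    (q : ℂ) (hq : q = p ^ 2) :
    (∀ r s : Fin L, s < r →
      taAnn p r * taAnn p s + q • (taAnn p s * taAnn p r) = 0 ∧
      taCre p r * taCre p s + q • (taCre p s * taCre p r) = 0 ∧
      taCre p r * taAnn p s + q⁻¹ • (taAnn p s * taCre p r) = 0 ∧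
      taAnn p r * taCre p s + q⁻¹ • (taCre p s * taAnn p r) = 0) ∧
    (∀ r : Fin L,
      taAnn p r * taCre p r + taCre p r * taAnn p r = 1 ∧
      taAnn p r * taAnn p r = 0 ∧
      taCre p r * taCre p r = 0) := by
  have hq2 : q = p ^ ((1 : ℤ) * tldE true + 1 * tldE true) := by
    rw [hq]; norm_num [tldE, zpow_two, sq]
  have hq2' : q = p ^ ((-1 : ℤ) * tldE false + (-1) * tldE false) := by
    rw [hq]; norm_num [tldE, zpow_two, sq]
  have hqi : q⁻¹ = p ^ ((-1 : ℤ) * tldE true + 1 * tldE false) := by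
    rw [hq]
    have : ((-1 : ℤ) * tldE true + 1 * tldE false) = -2 := by norm_num [tldE]
    rw [this, zpow_neg, zpow_two, sq]
  have hqi' : q⁻¹ = p ^ ((1 : ℤ) * tldE false + (-1) * tldE true) := by
    rw [hq]
    have : ((1 : ℤ) * tldE false + (-1) * tldE true) = -2 := by norm_num [tldE]
    rw [this, zpow_neg, zpow_two, sq]
  constructor
  · intro r s hsr
    refine ⟨?_, ?_, ?_, ?_⟩
    · rw [tld_taAnn_eq p r, tld_taAnn_eq p s, hq2]
      exact tldT_braid p hp 1 1 true true r s hsr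
    · rw [tld_taCre_eq p r, tld_taCre_eq p s, hq2']
      exact tldT_braid p hp (-1) (-1) false false r s hsr
    · rw [tld_taCre_eq p r, tld_taAnn_eq p s, hqi]
      exact tldT_braid p hp (-1) 1 false true r s hsr
    · rw [tld_taAnn_eq p r, tld_taCre_eq p s, hqi']
      exact tldT_braid p hp 1 (-1) true false r s hsr
  · intro r
    exact ⟨tld_same_site p hp r, tld_taAnn_sq p r, tld_taCre_sq p r⟩

end
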